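/- Let α_i > 0 and p_i ∈ (0,1] for i = 1,…,N and let K ≥ 1 be such that the quantities μ_i* := K √(α_i/p_i) / Σ_j √(α_j/p_j) satisfy μ_i* ≤ 1 for all i. Then μ* minimizes Σ_{i=1}^N α_i / (p_i μ_i) over all μ ∈ (0,1]^N with Σ_{i=1}^N μ_i = K. -/

import Mathlib

open Finset

/-- Optimal Randomized Policy: in the interior case, μ*_i = K√(α_i/p_i)/Σ_j√(α_j/p_j)
minimizes Σ α_i/(p_i μ_i) over μ ∈ (0,1]^N with Σ μ_i = K. -/
theorem stmt_1 {N : ℕ} (hN : 0 < N) (K : ℝ) (hK : 1 ≤ K)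
    (α p : Fin N → ℝ) (hα : ∀ i, 0 < α i) (hp : ∀ i, 0 < p i ∧ p i ≤ 1)
    (μstar : Fin N → ℝ)
    (hμstar : ∀ i, μstar i = K * Real.sqrt (α i / p i) / (∑ j, Real.sqrt (α j / p j)))
    (hle : ∀ i, μstar i ≤ 1) :
    (∀ i, 0 < μstar i ∧ μstar i ≤ 1) ∧ (∑ i, μstar i) = K ∧
    (∀ μ : Fin N → ℝ, (∀ i, 0 < μ i ∧ μ i ≤ 1) → (∑ i, μ i) = K →
      ∑ i, α i / (p i * μstar i) ≤ ∑ i, α i / (p i * μ i)) := by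
  have hp0 : ∀ i, 0 < p i := fun i => (hp i).1
  set s : Fin N → ℝ := fun i => Real.sqrt (α i / p i) with hs
  have hs0 : ∀ i, 0 < s i := fun i => Real.sqrt_pos.mpr (div_pos (hα i) (hp0 i))
  have hS : 0 < ∑ j, s j := Finset.sum_pos (fun i _ => hs0 i) ⟨⟨0, hN⟩, mem_univ _⟩
  set S := ∑ j, s j with hSdef
  have hK0 : 0 < K := lt_of_lt_of_le one_pos hK
  have hμpos : ∀ i, 0 < μstar i := fun i => by
    rw [hμstar]; exact div_pos (mul_pos hK0 (hs0 i)) hS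
  have hsum : (∑ i, μstar i) = K := by
    have : ∀ i ∈ (univ : Finset (Fin N)), μstar i = K * s i / S := fun i _ => hμstar i
    rw [Finset.sum_congr rfl this]
    rw [← Finset.sum_div, ← Finset.mul_sum, ← hSdef]
    field_simp
  refine ⟨fun i => ⟨hμpos i, hle i⟩, hsum, ?_⟩
  intro μ hμ hμK
  have hsq : ∀ i, α i / p i = s i ^ 2 := fun i =>
    (Real.sq_sqrt (le_of_lt (div_pos (hα i) (hp0 i)))).symm
  set c : ℝ := S / K with hc
  have hc0 : 0 < c := div_pos hS hK0
  have hval : ∑ i, α i / (p i * μstar i) = S ^ 2 / K := by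
    have h1 : ∀ i ∈ (univ : Finset (Fin N)), α i / (p i * μstar i) = s i * c := by
      intro i _
      rw [hμstar i, div_mul_eq_div_div, hsq i, hc]
      have hsi := (hs0 i).ne'
      field_simp
      ring_nf
      rw [Real.sqrt_sq (hs0 i).le]
    rw [Finset.sum_congr rfl h1, ← Finset.sum_mul, ← hSdef, hc]
    field_simp
  rw [hval]
  have key : ∀ i ∈ (univ : Finset (Fin N)),
      2 * s i * c - c ^ 2 * μ i ≤ α i / (p i * μ i) := by
    intro i _
    have hμi := (hμ i).1
    have h2 : 2 * s i * (c * μ i) ≤ s i ^ 2 + (c * μ i) ^ 2 := two_mul_le_add_sq _ _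
    have h3 : (2 * s i * (c * μ i)) / μ i ≤ (s i ^ 2 + (c * μ i) ^ 2) / μ i :=
      div_le_div_of_nonneg_right h2 hμi.le
    have hl : (2 * s i * (c * μ i)) / μ i = 2 * s i * c := by field_simp
    have hr : (s i ^ 2 + (c * μ i) ^ 2) / μ i = s i ^ 2 / μ i + c ^ 2 * μ i := by
      field_simp
    rw [hl, hr] at h3
    rw [div_mul_eq_div_div, hsq i]
    linarith
  have hsumLB : ∑ i, (2 * s i * c - c ^ 2 * μ i) ≤ ∑ i, α i / (p i * μ i) :=
    Finset.sum_le_sum key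
  have hcalc : ∑ i, (2 * s i * c - c ^ 2 * μ i) = S ^ 2 / K := by
    rw [Finset.sum_sub_distrib, ← Finset.sum_mul, ← Finset.mul_sum, ← Finset.mul_sum]
    rw [hμK, ← hSdef, hc]
    field_simp
    ring
  linarith
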